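/- Let a(·,·) be a symmetric, continuous, coercive bilinear form on a Hilbert space V with energy norm ⦀·⦀, let V_h and W_h be closed subspaces with V_h ∩ W_h = {0} satisfying the strengthened CBS inequality with constant γ < 1, and assume the saturation assumption ⦀u − u_q⦀ ≤ β⦀u − u_h⦀ with β < 1, where u_q is the Galerkin solution in V̄_h = V_h ⊕ W_h and u_h the Galerkin solution in V_h. Let z_h ∈ W_h solve a(z_h, w_h) = f(w_h) − a(u_h, w_h) for all w_h ∈ W_h. Then there exist constants c, C > 0 depending only on β and γ such that c ⦀z_h⦀ ≤ ⦀u − u_h⦀ ≤ C ⦀z_h⦀. -/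
import Mathlib


set_option maxHeartbeats 2000000 in
/-- Reliability and efficiency of the hierarchical basis error estimator:
under the strengthened CBS inequality (constant `γ < 1`) and the saturation
assumption (constant `β < 1`), the energy norm of the estimator `z_h` is
equivalent to the energy norm of the true error, with constants depending
only on `β` and `γ`. -/
theorem hierarchical_basis_estimator_equivalence
    (β γ : ℝ) (hβ0 : 0 ≤ β) (hβ : β < 1) (hγ0 : 0 ≤ γ) (hγ : γ < 1) :
    ∃ c C : ℝ, 0 < c ∧ 0 < C ∧
      ∀ (V : Type) (_ : NormedAddCommGroup V) (_ : InnerProductSpace ℝ V)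
        (_ : CompleteSpace V)
        (a : V →ₗ[ℝ] V →ₗ[ℝ] ℝ),
        (∀ v w : V, a v w = a w v) →
        (∃ Mc : ℝ, ∀ v w : V, |a v w| ≤ Mc * ‖v‖ * ‖w‖) →
        (∃ α : ℝ, 0 < α ∧ ∀ v : V, α * ‖v‖ ^ 2 ≤ a v v) →
        ∀ (Vh Wh : Submodule ℝ V),
          IsClosed (Vh : Set V) → IsClosed (Wh : Set V) → Vh ⊓ Wh = ⊥ →
          (∀ vh ∈ Vh, ∀ wh ∈ Wh,
            |a vh wh| ≤ γ * Real.sqrt (a vh vh) * Real.sqrt (a wh wh)) →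
          ∀ (f : V →L[ℝ] ℝ) (u uh uq zh : V),
            (∀ v : V, a u v = f v) →
            uh ∈ Vh → (∀ vh ∈ Vh, a uh vh = f vh) →
            uq ∈ Vh ⊔ Wh → (∀ vq ∈ Vh ⊔ Wh, a uq vq = f vq) →
            Real.sqrt (a (u - uq) (u - uq)) ≤
              β * Real.sqrt (a (u - uh) (u - uh)) →
            zh ∈ Wh → (∀ wh ∈ Wh, a zh wh = f wh - a uh wh) →
            c * Real.sqrt (a zh zh) ≤ Real.sqrt (a (u - uh) (u - uh)) ∧
              Real.sqrt (a (u - uh) (u - uh)) ≤ C * Real.sqrt (a zh zh) := by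
  have hβ2 : 0 < 1 - β ^ 2 := by nlinarith
  have hγ2 : 0 < 1 - γ ^ 2 := by nlinarith
  have hK : 0 < (1 - β ^ 2) * (1 - γ ^ 2) := mul_pos hβ2 hγ2
  have hKs : 0 < Real.sqrt ((1 - β ^ 2) * (1 - γ ^ 2)) := Real.sqrt_pos.mpr hK
  refine ⟨1, 1 / Real.sqrt ((1 - β ^ 2) * (1 - γ ^ 2)), one_pos,
    one_div_pos.mpr hKs, ?_⟩
  intro V _ _ _ a hsymm _ hcoer Vh Wh _ _ _ hCBS f u uh uq zh hu huhV huh huqV huq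
    hsat hzhW hzh
  obtain ⟨α, hα, hco⟩ := hcoer
  have hpos : ∀ v : V, 0 ≤ a v v := fun v =>
    le_trans (by positivity) (hco v)
  -- Cauchy–Schwarz for the energy inner product
  have hCS : ∀ v w : V, |a v w| ≤ Real.sqrt (a v v) * Real.sqrt (a w w) := by
    intro v w
    have hq : ∀ t : ℝ, 0 ≤ (a w w) * (t * t) + (2 * a v w) * t + a v v := by
      intro t
      have h0 := hpos (v + t • w)
      have expand : a (v + t • w) (v + t • w)
          = a w w * (t * t) + 2 * a v w * t + a v v := by
        simp only [map_add, map_smul, LinearMap.add_apply, LinearMap.smul_apply,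
          smul_eq_mul]
        rw [hsymm w v]; ring
      linarith [expand ▸ h0]
    have hd := discrim_le_zero hq
    rw [discrim] at hd
    have h1 : (a v w) ^ 2 ≤ a v v * a w w := by nlinarith
    calc |a v w| = Real.sqrt ((a v w) ^ 2) := (Real.sqrt_sq_eq_abs _).symm
      _ ≤ Real.sqrt (a v v * a w w) := Real.sqrt_le_sqrt h1
      _ = Real.sqrt (a v v) * Real.sqrt (a w w) := Real.sqrt_mul (hpos v) _
  obtain ⟨e, he⟩ : ∃ x, x = u - uh := ⟨_, rfl⟩
  obtain ⟨r, hrdef⟩ : ∃ x, x = u - uq := ⟨_, rfl⟩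
  obtain ⟨d, hddef⟩ : ∃ x, x = uq - uh := ⟨_, rfl⟩
  rw [← he] at hsat ⊢
  rw [← hrdef] at hsat
  -- Galerkin orthogonality for uq
  have hr : ∀ x ∈ Vh ⊔ Wh, a r x = 0 := by
    intro x hx
    simp [hrdef, map_sub, LinearMap.sub_apply, hu x, huq x hx]
  -- Galerkin orthogonality for uh
  have heVh : ∀ x ∈ Vh, a e x = 0 := by
    intro x hx
    simp [he, map_sub, LinearMap.sub_apply, hu x, huh x hx]
  have hdV : d ∈ Vh ⊔ Wh := by
    rw [hddef]; exact Submodule.sub_mem _ huqV (Submodule.mem_sup_left huhV)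
  have hed : e = r + d := by rw [he, hrdef, hddef]; abel
  -- Pythagoras
  have hpyth : a e e = a r r + a d d := by
    have h1 : a r d = 0 := hr d hdV
    have h2 : a d r = 0 := by rw [← hsymm]; exact h1
    rw [hed]
    simp only [map_add, LinearMap.add_apply]
    linarith
  -- saturation squared
  have hsat2 : a r r ≤ β ^ 2 * a e e := by
    have h1 : Real.sqrt (a r r) ≤ β * Real.sqrt (a e e) := hsat
    have h2 := Real.sq_sqrt (hpos r)
    have h3 := Real.sq_sqrt (hpos e)
    nlinarith [Real.sqrt_nonneg (a r r), Real.sqrt_nonneg (a e e)]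
  have hbee : (1 - β ^ 2) * a e e ≤ a d d := by nlinarith
  -- decompose d
  obtain ⟨vh, hvh, wh, hwh, hsum⟩ := Submodule.mem_sup.mp hdV
  -- a d d = a zh wh
  have hdd1 : a d vh = 0 := by
    have h1 : a e vh = 0 := heVh vh hvh
    have h2 : a r vh = 0 := hr vh (Submodule.mem_sup_left hvh)
    have : a e vh = a r vh + a d vh := by
      rw [hed]; simp [map_add, LinearMap.add_apply]
    linarith
  have hdwh : a d wh = a zh wh := by
    have h1 : a r wh = 0 := hr wh (Submodule.mem_sup_right hwh)
    have h2 : a e wh = a r wh + a d wh := by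
      rw [hed]; simp [map_add, LinearMap.add_apply]
    have h3 : a e wh = f wh - a uh wh := by
      simp [he, map_sub, LinearMap.sub_apply, hu wh]
    rw [hzh wh hwh]
    linarith
  have hdd : a d d = a zh wh := by
    have h4 : a d d = a d vh + a d wh := by
      nth_rewrite 2 [← hsum]
      exact map_add (a d) vh wh
    rw [h4, hdd1, hdwh]; ring
  -- CBS lower bound on a d d in terms of a wh wh
  have hCBSlow : (1 - γ ^ 2) * a wh wh ≤ a d d := by
    set x := Real.sqrt (a vh vh) with hx
    set y := Real.sqrt (a wh wh) with hy
    have hx2 : x ^ 2 = a vh vh := Real.sq_sqrt (hpos vh)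
    have hy2 : y ^ 2 = a wh wh := Real.sq_sqrt (hpos wh)
    have hcbs := hCBS vh hvh wh hwh
    have hlow : -(γ * x * y) ≤ a vh wh := neg_le_of_abs_le hcbs
    have hexp : a d d = a vh vh + 2 * a vh wh + a wh wh := by
      conv_lhs => rw [← hsum]
      simp only [map_add, LinearMap.add_apply]
      rw [hsymm wh vh]; ring
    nlinarith [sq_nonneg (x - γ * y), Real.sqrt_nonneg (a vh vh),
      Real.sqrt_nonneg (a wh wh)]
  -- a d d ≤ sqrt(a zh zh) * sqrt(a wh wh)
  have hddle : a d d ≤ Real.sqrt (a zh zh) * Real.sqrt (a wh wh) :=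
    hdd ▸ (le_abs_self _).trans (hCS zh wh)
  -- (1-γ²) a d d ≤ a zh zh
  have hgdd : (1 - γ ^ 2) * a d d ≤ a zh zh := by
    have hsq : (a d d) ^ 2 ≤ a zh zh * a wh wh := by
      have h1 : (a d d) ^ 2 ≤ (Real.sqrt (a zh zh) * Real.sqrt (a wh wh)) ^ 2 :=
        pow_le_pow_left₀ (hpos d) hddle 2
      have h2 : (Real.sqrt (a zh zh) * Real.sqrt (a wh wh)) ^ 2
          = a zh zh * a wh wh := by
        rw [mul_pow, Real.sq_sqrt (hpos zh), Real.sq_sqrt (hpos wh)]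
      linarith [h2 ▸ h1]
    obtain ⟨D, hD⟩ : ∃ D, D = a d d := ⟨_, rfl⟩
    obtain ⟨Z, hZ⟩ : ∃ Z, Z = a zh zh := ⟨_, rfl⟩
    obtain ⟨W, hW⟩ : ∃ W, W = a wh wh := ⟨_, rfl⟩
    simp only [← hD, ← hZ, ← hW] at hsq hCBSlow
    rw [← hD, ← hZ]
    have hD0 : 0 ≤ D := hD ▸ hpos d
    have hZ0 : 0 ≤ Z := hZ ▸ hpos zh
    rcases hD0.eq_or_lt with h | h
    · rw [← h]; simpa using hZ0
    · have h3 : (1 - γ ^ 2) * D * D ≤ Z * D := by nlinarith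
      exact le_of_mul_le_mul_right h3 h
  -- reliability: (1-β²)(1-γ²) a e e ≤ a zh zh
  have hrel : (1 - β ^ 2) * (1 - γ ^ 2) * a e e ≤ a zh zh := by
    obtain ⟨E, hE⟩ : ∃ E, E = a e e := ⟨_, rfl⟩
    obtain ⟨D, hD⟩ : ∃ D, D = a d d := ⟨_, rfl⟩
    obtain ⟨Z, hZ⟩ : ∃ Z, Z = a zh zh := ⟨_, rfl⟩
    rw [← hE, ← hZ]
    rw [← hE, ← hD] at hbee
    rw [← hD, ← hZ] at hgdd
    nlinarith [mul_le_mul_of_nonneg_left hbee hγ2.le]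
  constructor
  · -- efficiency with c = 1
    have hzee : a zh zh = a e zh := by
      have h1 : a e zh = f zh - a uh zh := by
        simp [he, map_sub, LinearMap.sub_apply, hu zh]
      rw [hzh zh hzhW, h1]
    have h2 : Real.sqrt (a zh zh) ^ 2 ≤ Real.sqrt (a e e) * Real.sqrt (a zh zh) := by
      rw [Real.sq_sqrt (hpos zh)]
      calc a zh zh = a e zh := hzee
        _ ≤ |a e zh| := le_abs_self _
        _ ≤ _ := hCS e zh
    rcases (Real.sqrt_nonneg (a zh zh)).eq_or_lt with h | h
    · rw [one_mul, ← h]; exact Real.sqrt_nonneg _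
    · rw [one_mul]
      nlinarith
  · -- reliability
    have h1 : Real.sqrt ((1 - β ^ 2) * (1 - γ ^ 2) * a e e) ≤ Real.sqrt (a zh zh) :=
      Real.sqrt_le_sqrt hrel
    rw [Real.sqrt_mul (le_of_lt hK)] at h1
    rw [div_mul_eq_mul_div, one_mul, le_div_iff₀ hKs, mul_comm]
    exact h1
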